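/- arXiv:2302.08598 — 2 statements merged into one kernel-verified Lean document; each statement's English description precedes it below -/
import Mathlib

section
/- For every smooth matrix field u : ℝ³ → ℝ^{3×3}, there holds vskw(curl(Ξ⁻¹(curl u))) = 0 pointwise, where Ξ⁻¹ M = Mᵀ − ½ tr(M) I is applied pointwise; i.e. the composite operator 2 vskw curl Ξ⁻¹ curl vanishes identically. -/
open Matrix

/-- Partial derivative `∂ f / ∂ xᵢ`. -/
noncomputable def pder (i : Fin 3) (f : (Fin 3 → ℝ) → ℝ) : (Fin 3 → ℝ) → ℝ :=
  fun x => fderiv ℝ f x (Pi.single i 1)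

/-- Curl of a vector field on ℝ³. -/
noncomputable def vcurl (v : (Fin 3 → ℝ) → (Fin 3 → ℝ)) : (Fin 3 → ℝ) → (Fin 3 → ℝ) :=
  fun x => ![pder 1 (fun y => v y 2) x - pder 2 (fun y => v y 1) x,
             pder 2 (fun y => v y 0) x - pder 0 (fun y => v y 2) x,
             pder 0 (fun y => v y 1) x - pder 1 (fun y => v y 0) x]

/-- Divergence of a vector field on ℝ³. -/
noncomputable def vdiv (v : (Fin 3 → ℝ) → (Fin 3 → ℝ)) : (Fin 3 → ℝ) → ℝ :=
  fun x => ∑ i, pder i (fun y => v y i) x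

/-- Row-wise curl of a matrix field on ℝ³. -/
noncomputable def mcurl (u : (Fin 3 → ℝ) → Matrix (Fin 3) (Fin 3) ℝ) :
    (Fin 3 → ℝ) → Matrix (Fin 3) (Fin 3) ℝ :=
  fun x => Matrix.of fun i => vcurl (fun y => u y i) x

/-- Gradient (Jacobian) of a vector field: `(grad v)ᵢⱼ = ∂vᵢ/∂xⱼ`. -/
noncomputable def gradv (v : (Fin 3 → ℝ) → (Fin 3 → ℝ)) :
    (Fin 3 → ℝ) → Matrix (Fin 3) (Fin 3) ℝ :=
  fun x => Matrix.of fun i j => pder j (fun y => v y i) x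

/-- `mskw v` is the skew-symmetric matrix associated with `v ∈ ℝ³`. -/
def mskw (v : Fin 3 → ℝ) : Matrix (Fin 3) (Fin 3) ℝ :=
  !![0, -v 2, v 1; v 2, 0, -v 0; -v 1, v 0, 0]

/-- `vskw M = mskw⁻¹ (skw M)`, the vector associated with the skew part of `M`. -/
noncomputable def vskw (M : Matrix (Fin 3) (Fin 3) ℝ) : Fin 3 → ℝ :=
  ![(M 2 1 - M 1 2) / 2, (M 0 2 - M 2 0) / 2, (M 1 0 - M 0 1) / 2]

/-- `Ξ M = Mᵀ - tr(M)·I`. -/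
noncomputable def Xi (M : Matrix (Fin 3) (Fin 3) ℝ) : Matrix (Fin 3) (Fin 3) ℝ :=
  Mᵀ - Matrix.trace M • (1 : Matrix (Fin 3) (Fin 3) ℝ)

/-- `Ξ⁻¹ M = Mᵀ - ½ tr(M)·I`. -/
noncomputable def XiInv (M : Matrix (Fin 3) (Fin 3) ℝ) : Matrix (Fin 3) (Fin 3) ℝ :=
  Mᵀ - (Matrix.trace M / 2) • (1 : Matrix (Fin 3) (Fin 3) ℝ)

/-- Symmetric part of a matrix. -/
noncomputable def symM (M : Matrix (Fin 3) (Fin 3) ℝ) : Matrix (Fin 3) (Fin 3) ℝ :=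
  (1 / 2 : ℝ) • (M + Mᵀ)


/-! ### Auxiliary lemmas -/

@[fun_prop]
lemma contDiff_pder {f : (Fin 3 → ℝ) → ℝ} (hf : ContDiff ℝ (⊤ : ℕ∞) f) (i : Fin 3) :
    ContDiff ℝ (⊤ : ℕ∞) (pder i f) := by
  unfold pder
  exact (hf.fderiv_right (m := (⊤ : ℕ∞)) le_rfl).clm_apply contDiff_const

@[fun_prop]
lemma differentiable_pder {f : (Fin 3 → ℝ) → ℝ} (hf : ContDiff ℝ (⊤ : ℕ∞) f) (i : Fin 3) :
    Differentiable ℝ (pder i f) := (contDiff_pder hf i).differentiable (by simp)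

lemma pder_sub {f g : (Fin 3 → ℝ) → ℝ} {x : Fin 3 → ℝ} (i : Fin 3)
    (hf : DifferentiableAt ℝ f x) (hg : DifferentiableAt ℝ g x) :
    pder i (fun y => f y - g y) x = pder i f x - pder i g x := by
  unfold pder; rw [fderiv_fun_sub hf hg]; rfl

lemma pder_add {f g : (Fin 3 → ℝ) → ℝ} {x : Fin 3 → ℝ} (i : Fin 3)
    (hf : DifferentiableAt ℝ f x) (hg : DifferentiableAt ℝ g x) :
    pder i (fun y => f y + g y) x = pder i f x + pder i g x := by
  unfold pder; rw [fderiv_fun_add hf hg]; rfl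

lemma pder_div_const {f : (Fin 3 → ℝ) → ℝ} {x : Fin 3 → ℝ} (i : Fin 3) (c : ℝ)
    (hf : DifferentiableAt ℝ f x) :
    pder i (fun y => f y / c) x = pder i f x / c := by
  unfold pder
  simp only [div_eq_mul_inv]
  rw [fderiv_mul_const hf]
  simp [mul_comm]

lemma pder_comm {f : (Fin 3 → ℝ) → ℝ} (hf : ContDiff ℝ (⊤ : ℕ∞) f) (a b : Fin 3) (x : Fin 3 → ℝ) :
    pder a (pder b f) x = pder b (pder a f) x := by
  have hd : ∀ y, HasFDerivAt f (fderiv ℝ f y) y :=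
    fun y => (hf.differentiable (by simp) y).hasFDerivAt
  have h2 : DifferentiableAt ℝ (fderiv ℝ f) x :=
    ((hf.fderiv_right (m := (⊤ : ℕ∞)) le_rfl).differentiable (by simp)) x
  have hsymm := second_derivative_symmetric hd h2.hasFDerivAt
  have key : ∀ v w : Fin 3 → ℝ,
      fderiv ℝ (fun y => fderiv ℝ f y w) x v = fderiv ℝ (fderiv ℝ f) x v w := by
    intro v w
    have := fderiv_clm_apply h2 (differentiableAt_const w)
    rw [show (fun y => fderiv ℝ f y w) = fun y => (fderiv ℝ f y) w from rfl, this]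
    simp
  unfold pder
  rw [key, key, hsymm]

/-- Identity (2.10d): the composite operator `2 vskw curl Ξ⁻¹ curl` vanishes identically:
`vskw (curl (Ξ⁻¹ (curl u))) = 0` for every smooth matrix field `u`. -/
theorem vskw_curl_XiInv_curl_eq_zero
    (u : (Fin 3 → ℝ) → Matrix (Fin 3) (Fin 3) ℝ)
    (hu : ∀ i j, ContDiff ℝ (⊤ : ℕ∞) fun x => u x i j) :
    ∀ x : Fin 3 → ℝ, vskw (mcurl (fun y => XiInv (mcurl u y)) x) = 0 := by
  intro x
  have h10 : ∀ i j : Fin 3, pder 1 (pder 0 (fun y => u y i j)) x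
      = pder 0 (pder 1 (fun y => u y i j)) x := fun i j => pder_comm (hu i j) 1 0 x
  have h20 : ∀ i j : Fin 3, pder 2 (pder 0 (fun y => u y i j)) x
      = pder 0 (pder 2 (fun y => u y i j)) x := fun i j => pder_comm (hu i j) 2 0 x
  have h21 : ∀ i j : Fin 3, pder 2 (pder 1 (fun y => u y i j)) x
      = pder 1 (pder 2 (fun y => u y i j)) x := fun i j => pder_comm (hu i j) 2 1 x
  funext m
  fin_cases m <;>
  · simp only [vskw, mcurl, vcurl, XiInv, Matrix.of_apply, Matrix.cons_val', Matrix.cons_val_zero,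
      Matrix.cons_val_one, Matrix.head_cons, Matrix.head_fin_const, Matrix.cons_val_two,
      Matrix.tail_cons, Matrix.sub_apply, Matrix.transpose_apply, Matrix.smul_apply,
      Matrix.one_apply, Matrix.trace, Matrix.diag_apply, Fin.sum_univ_three,
      smul_eq_mul, Pi.zero_apply, Fin.zero_eta, Fin.mk_one, Fin.isValue,
      if_true, if_false, mul_one, mul_zero, sub_zero, reduceIte, Fin.reduceEq]
    norm_num
    simp (disch := fun_prop) only [pder_sub, pder_add, pder_div_const]
    simp only [h10, h20, h21]
    ring
end

section
/- For every smooth matrix field u : ℝ³ → ℝ^{3×3}, there holds pointwise [(curl u)ᵀ]_{Fn} = curl_F u_FF, i.e. nᵀ (curl u)ᵀ Q equals the row covector curl_F(Q u Q). -/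
open Matrix

/-- Tangential projection `Q = I - n nᵀ`. -/
noncomputable def pQ (n : Fin 3 → ℝ) : Matrix (Fin 3) (Fin 3) ℝ := 1 - vecMulVec n n

/-- Directional derivative of a scalar field along the vector `t`. -/
noncomputable def dder (t : Fin 3 → ℝ) (f : (Fin 3 → ℝ) → ℝ) : (Fin 3 → ℝ) → ℝ :=
  fun x => fderiv ℝ f x t

/-- Surface gradient of a scalar: `grad_F φ = (∂_{t₁}φ) t₁ + (∂_{t₂}φ) t₂`. -/
noncomputable def gradF (t₁ t₂ : Fin 3 → ℝ) (φ : (Fin 3 → ℝ) → ℝ) (x : Fin 3 → ℝ) :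
    Fin 3 → ℝ :=
  dder t₁ φ x • t₁ + dder t₂ φ x • t₂

/-- Surface rot of a scalar: `rot_F φ = (∂_{t₂}φ) t₁ - (∂_{t₁}φ) t₂`. -/
noncomputable def rotF (t₁ t₂ : Fin 3 → ℝ) (φ : (Fin 3 → ℝ) → ℝ) (x : Fin 3 → ℝ) :
    Fin 3 → ℝ :=
  dder t₂ φ x • t₁ - dder t₁ φ x • t₂

/-- Surface curl of a (tangential) vector field `w = w₁ t₁ + w₂ t₂`:
`curl_F w = ∂_{t₁} w₂ - ∂_{t₂} w₁` where `wᵢ = w ⬝ᵥ tᵢ`. -/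
noncomputable def curlF (t₁ t₂ : Fin 3 → ℝ) (w : (Fin 3 → ℝ) → (Fin 3 → ℝ))
    (x : Fin 3 → ℝ) : ℝ :=
  dder t₁ (fun y => w y ⬝ᵥ t₂) x - dder t₂ (fun y => w y ⬝ᵥ t₁) x

/-- Surface divergence of a (tangential) vector field:
`div_F w = ∂_{t₁} w₁ + ∂_{t₂} w₂`. -/
noncomputable def divF (t₁ t₂ : Fin 3 → ℝ) (w : (Fin 3 → ℝ) → (Fin 3 → ℝ))
    (x : Fin 3 → ℝ) : ℝ :=
  dder t₁ (fun y => w y ⬝ᵥ t₁) x + dder t₂ (fun y => w y ⬝ᵥ t₂) x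

/-- Surface gradient of a (tangential) vector field:
`grad_F w = t₁ (grad_F w₁)ᵀ + t₂ (grad_F w₂)ᵀ`. -/
noncomputable def gradFvec (t₁ t₂ : Fin 3 → ℝ) (w : (Fin 3 → ℝ) → (Fin 3 → ℝ))
    (x : Fin 3 → ℝ) : Matrix (Fin 3) (Fin 3) ℝ :=
  vecMulVec t₁ (gradF t₁ t₂ (fun y => w y ⬝ᵥ t₁) x)
  + vecMulVec t₂ (gradF t₁ t₂ (fun y => w y ⬝ᵥ t₂) x)

/-- Surface rot of a (tangential) row field `q = q₁ t₁ᵀ + q₂ t₂ᵀ`: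
`rot_F q = t₁ (rot_F q₁)ᵀ + t₂ (rot_F q₂)ᵀ`. -/
noncomputable def rotFrow (t₁ t₂ : Fin 3 → ℝ) (q : (Fin 3 → ℝ) → (Fin 3 → ℝ))
    (x : Fin 3 → ℝ) : Matrix (Fin 3) (Fin 3) ℝ :=
  vecMulVec t₁ (rotF t₁ t₂ (fun y => q y ⬝ᵥ t₁) x)
  + vecMulVec t₂ (rotF t₁ t₂ (fun y => q y ⬝ᵥ t₂) x)

/-- Surface curl of a tangential matrix field `u` (e.g. `u = u_FF`), represented as the
row covector `curl_F u = (curl_F (u_{Ft₁})ᵀ) t₁ᵀ + (curl_F (u_{Ft₂})ᵀ) t₂ᵀ`, using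
`(u_{Fs})ᵀ = Q uᵀ s`. -/
noncomputable def curlFmat (t₁ t₂ n : Fin 3 → ℝ)
    (u : (Fin 3 → ℝ) → Matrix (Fin 3) (Fin 3) ℝ) (x : Fin 3 → ℝ) : Fin 3 → ℝ :=
  curlF t₁ t₂ (fun y => (pQ n * (u y)ᵀ) *ᵥ t₁) x • t₁
  + curlF t₁ t₂ (fun y => (pQ n * (u y)ᵀ) *ᵥ t₂) x • t₂

/-- Surface incompatibility of a tangential matrix field:
`inc_F u_FF = curl_F ((curl_F u_FF)ᵀ)`. -/
noncomputable def incF (t₁ t₂ n : Fin 3 → ℝ)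
    (u : (Fin 3 → ℝ) → Matrix (Fin 3) (Fin 3) ℝ) (x : Fin 3 → ℝ) : ℝ :=
  curlF t₁ t₂ (fun y => curlFmat t₁ t₂ n u y) x

/-- Surface trace: `tr_F M = t₁ᵀ M t₁ + t₂ᵀ M t₂`. -/
noncomputable def trF (t₁ t₂ : Fin 3 → ℝ) (M : Matrix (Fin 3) (Fin 3) ℝ) : ℝ :=
  t₁ ⬝ᵥ (M *ᵥ t₁) + t₂ ⬝ᵥ (M *ᵥ t₂)


lemma fderiv_apply_sum' (f : (Fin 3 → ℝ) → ℝ) (x t : Fin 3 → ℝ) :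
    fderiv ℝ f x t = ∑ k, t k * fderiv ℝ f x (Pi.single k 1) := by
  have ht : t = ∑ k : Fin 3, t k • (Pi.single k (1:ℝ) : Fin 3 → ℝ) := by
    funext j
    simp [Finset.sum_apply, Pi.single_apply, mul_ite, Finset.sum_ite_eq']
  conv_lhs => rw [ht]
  rw [map_sum]
  simp [smul_eq_mul]

lemma dder_bilin (u : (Fin 3 → ℝ) → Matrix (Fin 3) (Fin 3) ℝ)
    (hu : ∀ i j, ContDiff ℝ (⊤ : ℕ∞) fun x => u x i j) (v w t x : Fin 3 → ℝ) :
    dder t (fun y => v ⬝ᵥ (u y *ᵥ w)) x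
      = ∑ l, ∑ m, v l * w m * ∑ k, t k * pder k (fun y => u y l m) x := by
  have hf : ∀ l m : Fin 3, HasFDerivAt (fun y => v l * w m * u y l m)
      ((v l * w m) • fderiv ℝ (fun y => u y l m) x) x :=
    fun l m => (((hu l m).differentiable (by simp) x).hasFDerivAt).const_mul _
  have hsum : HasFDerivAt (fun y => ∑ l : Fin 3, ∑ m : Fin 3, v l * w m * u y l m)
      (∑ l : Fin 3, ∑ m : Fin 3, (v l * w m) • fderiv ℝ (fun y => u y l m) x) x :=
    HasFDerivAt.fun_sum (fun l _ => HasFDerivAt.fun_sum fun m _ => hf l m)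
  have heq : (fun y => v ⬝ᵥ (u y *ᵥ w)) = fun y => ∑ l : Fin 3, ∑ m : Fin 3, v l * w m * u y l m := by
    funext y
    simp [dotProduct, Matrix.mulVec, Finset.mul_sum]
    congr 1; funext l; congr 1; funext m; ring
  rw [dder, heq, hsum.fderiv]
  simp only [ContinuousLinearMap.coe_sum', Finset.sum_apply, ContinuousLinearMap.smul_apply,
    smul_eq_mul]
  refine Finset.sum_congr rfl fun l _ => Finset.sum_congr rfl fun m _ => ?_
  rw [fderiv_apply_sum']
  rfl

lemma vecMulVec_mulVec' (a c : Fin 3 → ℝ) : vecMulVec a a *ᵥ c = (a ⬝ᵥ c) • a := by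
  funext i
  simp [vecMulVec, Matrix.mulVec, dotProduct, Finset.sum_mul, Finset.mul_sum,
    Pi.smul_apply, smul_eq_mul]
  refine Finset.sum_congr rfl fun j _ => by ring

/-- Identity (id4): `[(curl u)ᵀ]_{Fn} = curl_F u_FF` for every smooth matrix field `u`;
the row covector `nᵀ (curl u)ᵀ Q` is represented as the vector `Q (curl u) n`. -/
theorem curl_transpose_Fn_eq_curlF_FF
    (t₁ t₂ n : Fin 3 → ℝ)
    (ht₁ : t₁ ⬝ᵥ t₁ = 1) (ht₂ : t₂ ⬝ᵥ t₂ = 1) (hn : n ⬝ᵥ n = 1)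
    (ht₁t₂ : t₁ ⬝ᵥ t₂ = 0) (ht₁n : t₁ ⬝ᵥ n = 0) (ht₂n : t₂ ⬝ᵥ n = 0)
    (hcross : crossProduct t₁ t₂ = n)
    (u : (Fin 3 → ℝ) → Matrix (Fin 3) (Fin 3) ℝ)
    (hu : ∀ i j, ContDiff ℝ (⊤ : ℕ∞) fun x => u x i j) :
    ∀ x : Fin 3 → ℝ,
      pQ n *ᵥ (mcurl u x *ᵥ n)
        = curlFmat t₁ t₂ n (fun y => pQ n * u y * pQ n) x := by
  intro x
  have hn' : n 0 * n 0 + n 1 * n 1 + n 2 * n 2 = 1 := by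
    simpa [dotProduct, Fin.sum_univ_three] using hn
  have hQsymm : (pQ n)ᵀ = pQ n := by
    rw [pQ, Matrix.transpose_sub, Matrix.transpose_one]
    congr 1
    ext i j
    simp [vecMulVec, mul_comm]
  have hQv : ∀ v : Fin 3 → ℝ, n ⬝ᵥ v = 0 → pQ n *ᵥ v = v := by
    intro v hv
    rw [pQ, Matrix.sub_mulVec, Matrix.one_mulVec, vecMulVec_mulVec', hv, zero_smul, sub_zero]
  have hNN : vecMulVec n n * vecMulVec n n = vecMulVec n n := by
    ext i j
    simp [Matrix.mul_apply, vecMulVec, Fin.sum_univ_three]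
    linear_combination (n i * n j) * hn'
  have hQQ : pQ n * pQ n = pQ n := by
    rw [pQ, sub_mul, one_mul, mul_sub, mul_one, hNN]
    abel
  -- completeness: t₁ t₁ᵀ + t₂ t₂ᵀ + n nᵀ = 1
  have hM : (Matrix.of ![t₁, t₂, n]) * (Matrix.of ![t₁, t₂, n])ᵀ = 1 := by
    ext i j
    rw [Matrix.mul_apply']
    have h1 : (fun k => Matrix.of ![t₁, t₂, n] i k) = ![t₁, t₂, n] i := rfl
    have h2 : (fun k => (Matrix.of ![t₁, t₂, n])ᵀ k j) = ![t₁, t₂, n] j := rfl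
    show ![t₁, t₂, n] i ⬝ᵥ ![t₁, t₂, n] j = _
    simp only [dotProduct, Fin.sum_univ_three]
    simp only [dotProduct, Fin.sum_univ_three] at ht₁ ht₂ hn ht₁t₂ ht₁n ht₂n
    fin_cases i <;> fin_cases j <;> simp [Matrix.one_apply] <;> linarith
  have hM2 := mul_eq_one_comm.mp hM
  have hP : ∀ i j, t₁ i * t₁ j + t₂ i * t₂ j + n i * n j = (1 : Matrix (Fin 3) (Fin 3) ℝ) i j := by
    intro i j
    have h := congrFun (congrFun hM2 i) j
    rw [Matrix.mul_apply, Fin.sum_univ_three] at h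
    simpa [Matrix.transpose_apply] using h
  have hQ : pQ n = vecMulVec t₁ t₁ + vecMulVec t₂ t₂ := by
    ext i j
    have h := hP i j
    simp only [pQ, Matrix.sub_apply, Matrix.add_apply, vecMulVec_apply]
    linarith
  -- components of n via the cross product
  have hn0 : n 0 = t₁ 1 * t₂ 2 - t₁ 2 * t₂ 1 := by rw [← hcross]; rfl
  have hn1 : n 1 = t₁ 2 * t₂ 0 - t₁ 0 * t₂ 2 := by rw [← hcross]; rfl
  have hn2 : n 2 = t₁ 0 * t₂ 1 - t₁ 1 * t₂ 0 := by rw [← hcross]; rfl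
  -- the scalar identity
  have main : ∀ s : Fin 3 → ℝ, n ⬝ᵥ s = 0 →
      s ⬝ᵥ (mcurl u x *ᵥ n)
        = curlF t₁ t₂ (fun y => (pQ n * (pQ n * u y * pQ n)ᵀ) *ᵥ s) x := by
    intro s hs
    have hfun : ∀ r : Fin 3 → ℝ, n ⬝ᵥ r = 0 →
        (fun y => ((pQ n * (pQ n * u y * pQ n)ᵀ) *ᵥ s) ⬝ᵥ r)
          = fun y => s ⬝ᵥ (u y *ᵥ r) := by
      intro r hr
      funext y
      have h1 : pQ n * (pQ n * u y * pQ n)ᵀ = pQ n * (u y)ᵀ * pQ n := by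
        rw [Matrix.transpose_mul, Matrix.transpose_mul, hQsymm, ← Matrix.mul_assoc,
          ← Matrix.mul_assoc, hQQ, Matrix.mul_assoc]
      rw [h1, show (pQ n * (u y)ᵀ * pQ n) *ᵥ s = pQ n *ᵥ ((u y)ᵀ *ᵥ (pQ n *ᵥ s)) from by
        rw [Matrix.mulVec_mulVec, Matrix.mulVec_mulVec], hQv s hs]
      rw [dotProduct_comm, Matrix.dotProduct_mulVec]
      have h2 : r ᵥ* pQ n = r := by
        rw [← hQsymm, Matrix.vecMul_transpose]
        exact hQv r hr
      rw [h2, Matrix.mulVec_transpose, Matrix.dotProduct_mulVec]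
      exact dotProduct_comm _ _
    simp only [curlF]
    rw [hfun t₂ (by rw [dotProduct_comm]; exact ht₂n),
      hfun t₁ (by rw [dotProduct_comm]; exact ht₁n),
      dder_bilin u hu s t₂ t₁ x, dder_bilin u hu s t₁ t₂ x]
    simp only [mcurl, vcurl, Matrix.mulVec, dotProduct, Fin.sum_univ_three, Matrix.of_apply,
      Matrix.cons_val_zero, Matrix.cons_val_one, Matrix.head_cons, Matrix.cons_val_two,
      Matrix.tail_cons]
    rw [hn0, hn1, hn2]
    ring
  -- assembling
  conv_lhs => rw [hQ, Matrix.add_mulVec, vecMulVec_mulVec', vecMulVec_mulVec']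
  rw [main t₁ (by rw [dotProduct_comm]; exact ht₁n),
    main t₂ (by rw [dotProduct_comm]; exact ht₂n)]
  simp only [curlFmat]
end
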